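/- Let A be a self-adjoint endomorphism of a finite-dimensional real inner product space satisfying A² = trace(A)·A and A ≠ 0. Then A has rank one, i.e. A = λP where λ = trace(A) ≠ 0 and P is an orthogonal projection onto a one-dimensional subspace. -/

import Mathlib

open Module LinearMap

/-!
If `t = trace A ≠ 0`, then `P = t⁻¹ • A` is an idempotent with `trace P = 1`, and the trace of an
idempotent is the dimension of its range. The trace cannot vanish: then `A ∘ A = 0`, and for a
symmetric `A` this gives `‖A x‖² = ⟪x, A (A x)⟫ = 0`.
-/

theorem LinearMap.IsSymmetric.eq_zero_of_comp_self_eq_zero {𝕜 E : Type*} [RCLike 𝕜]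
    [NormedAddCommGroup E] [InnerProductSpace 𝕜 E] {T : E →ₗ[𝕜] E} (hT : T.IsSymmetric)
    (h : T ∘ₗ T = 0) : T = 0 := by
  ext x
  have hTTx : T (T x) = 0 := LinearMap.congr_fun h x
  rw [zero_apply, ← inner_self_eq_zero (𝕜 := 𝕜), hT, hTTx, inner_zero_right]

section Field

variable {K M : Type*} [Field K] [AddCommGroup M] [Module K M]

theorem LinearMap.isIdempotentElem_inv_smul_of_comp_self_eq_smul {f : M →ₗ[K] M} {c : K}
    (h : f ∘ₗ f = c • f) : IsIdempotentElem (c⁻¹ • f) := by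
  change (c⁻¹ • f) ∘ₗ (c⁻¹ • f) = c⁻¹ • f
  rw [smul_comp, comp_smul, h, smul_smul, smul_smul]
  congr 1
  simpa only [inv_inv] using mul_self_mul_inv c⁻¹

theorem LinearMap.finrank_range_eq_one_of_comp_self_eq_trace_smul [CharZero K]
    [FiniteDimensional K M] {f : M →ₗ[K] M} (h : f ∘ₗ f = trace K M f • f)
    (h0 : trace K M f ≠ 0) : finrank K (range f) = 1 := by
  have htrace := (isIdempotentElem_inv_smul_of_comp_self_eq_smul h).isProj_range.trace
  rw [map_smul, smul_eq_mul, inv_mul_cancel₀ h0, range_smul _ _ (inv_ne_zero h0)] at htrace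
  exact_mod_cast htrace.symm

end Field

theorem stmt_4 {V : Type*} [NormedAddCommGroup V] [InnerProductSpace ℝ V]
    [FiniteDimensional ℝ V] (A : V →ₗ[ℝ] V) (hA : A.IsSymmetric)
    (hsq : A ∘ₗ A = LinearMap.trace ℝ V A • A) (hA0 : A ≠ 0) :
    finrank ℝ (LinearMap.range A) = 1 ∧ LinearMap.trace ℝ V A ≠ 0 ∧
      ∃ P : V →ₗ[ℝ] V, P ∘ₗ P = P ∧ P.IsSymmetric ∧
        finrank ℝ (LinearMap.range P) = 1 ∧ A = LinearMap.trace ℝ V A • P := by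
  set t := trace ℝ V A
  have ht : t ≠ 0 := fun ht ↦
    hA0 (hA.eq_zero_of_comp_self_eq_zero (by rw [hsq, ht, zero_smul]))
  have hrank := finrank_range_eq_one_of_comp_self_eq_trace_smul hsq ht
  refine ⟨hrank, ht, t⁻¹ • A, isIdempotentElem_inv_smul_of_comp_self_eq_smul hsq,
    hA.smul (conj_trivial _), by rwa [range_smul _ _ (inv_ne_zero ht)], ?_⟩
  rw [smul_smul, mul_inv_cancel₀ ht, one_smul]
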